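/- For every family 𝐅 = {𝓕_a : a ∈ A}, where each 𝓕_a is a family of filters over a set I_a, there exists a family 𝐐 = {𝓠_b : b ∈ B}, where each 𝓠_b is a family of filters over some set, such that the Frolík class 𝔉(𝐅c) equals 𝐐c, i.e., a topological space X satisfies X × Y ∈ 𝐅c for all Y ∈ 𝐅c if and only if X is 𝐐-compact. -/

import Mathlib

/-!
A sequence in `X × Y` converges along `F` iff both coordinate sequences do. Hence `X × Y` is
sequencewise `𝓕`-compact iff, for every sequence `y` in `Y`, `X` is sequencewise compact for the
subfamily of those `F ∈ 𝓕` along which `y` converges. So `𝐐` can be taken to consist of these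
subfamilies, for all `a`, all `𝐅`-compact `Y` and all sequences `y : I a → Y`.
-/

universe u

open Filter Topology

/-- A space `X` is sequencewise `𝓕`-compact if every `I`-indexed sequence in `X`
`F`-converges (to some point) for some `F ∈ 𝓕`. -/
def SeqFCompact {I : Type u} (𝓕 : Set (Filter I)) (X : Type u) [TopologicalSpace X] : Prop :=
  ∀ x : I → X, ∃ F ∈ 𝓕, ∃ p : X, Filter.Tendsto x F (𝓝 p)

def convergentFilters {I Y : Type u} [TopologicalSpace Y] (𝓕 : Set (Filter I)) (y : I → Y) :
    Set (Filter I) :=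
  {F ∈ 𝓕 | ∃ q, Tendsto y F (𝓝 q)}

theorem seqFCompact_prod_iff {I X Y : Type u} [TopologicalSpace X] [TopologicalSpace Y]
    (𝓕 : Set (Filter I)) :
    SeqFCompact 𝓕 (X × Y) ↔ ∀ y : I → Y, SeqFCompact (convergentFilters 𝓕 y) X := by
  constructor
  · intro h y x
    obtain ⟨F, hF, ⟨p, q⟩, hpq⟩ := h fun i => (x i, y i)
    exact ⟨F, ⟨hF, q, (continuous_snd.tendsto _).comp hpq⟩, p, (continuous_fst.tendsto _).comp hpq⟩
  · intro h z
    obtain ⟨F, ⟨hF, q, hq⟩, p, hp⟩ := h (fun i => (z i).2) fun i => (z i).1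
    exact ⟨F, hF, (p, q), hp.prodMk_nhds hq⟩

/-- For every family `𝐅 = {𝓕_a : a ∈ A}` of filter-families there is a family
`𝐐 = {𝓠_b : b ∈ B}` such that the Frolík class `𝔉(𝐅c)` equals `𝐐c`:
`X × Y` is `𝐅`-compact for every `𝐅`-compact `Y` iff `X` is `𝐐`-compact. -/
theorem exists_Q_frolik_FCompact {A : Type u} (I : A → Type u)
    (𝓕 : ∀ a : A, Set (Filter (I a))) :
    ∃ (B : Type u) (J : B → Type u) (𝓠 : ∀ b : B, Set (Filter (J b))),
      ∀ (X : Type u) [TopologicalSpace X],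
        (∀ (Y : Type u) [TopologicalSpace Y],
            (∀ a : A, SeqFCompact (𝓕 a) Y) → (∀ a : A, SeqFCompact (𝓕 a) (X × Y))) ↔
          (∀ b : B, SeqFCompact (𝓠 b) X) := by
  refine ⟨{p : Σ a : A, Set (Filter (I a)) //
      ∃ (Y : Type u) (_ : TopologicalSpace Y) (y : I p.1 → Y),
        (∀ a : A, SeqFCompact (𝓕 a) Y) ∧ p.2 = convergentFilters (𝓕 p.1) y},
    fun b => I b.1.1, fun b => b.1.2, fun X _ => ⟨?_, ?_⟩⟩
  · rintro h ⟨p, Y, _, y, hY, hp⟩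
    change SeqFCompact p.2 X
    rw [hp]
    exact (seqFCompact_prod_iff _).1 (h Y hY p.1) y
  · intro h Y _ hY a
    exact (seqFCompact_prod_iff _).2 fun y => h ⟨⟨a, _⟩, Y, _, y, hY, rfl⟩
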